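/- arXiv:1101.5897 — 4 statements merged into one kernel-verified Lean document; each statement's English description precedes it below -/
import Mathlib

section
/- Let λ_1, …, λ_n : ℝⁿ → ℝ be smooth with λ_i ≠ λ_j pointwise for i ≠ j, define a_{ij} = (∂_{r_i} λ_j)/(λ_i − λ_j) for i ≠ j, and assume the richness condition ∂_{r_k} a_{ij} = ∂_{r_i} a_{kj} holds for all distinct i, j, k. Then for all distinct i, j, k: ∂_{r_i} a_{kj} = a_{ki} a_{ij} + a_{ik} a_{kj} − a_{kj} a_{ij}. -/
/-- Partial derivative in the `i`-th coordinate direction of `ℝⁿ = Fin n → ℝ`. -/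
noncomputable def pder {n : ℕ} (i : Fin n) (f : (Fin n → ℝ) → ℝ) (x : Fin n → ℝ) : ℝ :=
  fderiv ℝ f x (Pi.single i 1)

lemma contDiff_pder {n : ℕ} {f : (Fin n → ℝ) → ℝ} (hf : ContDiff ℝ (⊤ : ℕ∞) f) (i : Fin n) :
    ContDiff ℝ (⊤ : ℕ∞) (pder i f) := by
  have h1 : ContDiff ℝ (⊤ : ℕ∞) (fderiv ℝ f) := hf.fderiv_right (by simp)
  exact (ContinuousLinearMap.apply ℝ ℝ (Pi.single i 1 : Fin n → ℝ)).contDiff.comp h1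

lemma pder_pder {n : ℕ} {f : (Fin n → ℝ) → ℝ} (hf : ContDiff ℝ (⊤ : ℕ∞) f) (i k : Fin n)
    (x : Fin n → ℝ) :
    pder i (pder k f) x = fderiv ℝ (fderiv ℝ f) x (Pi.single i 1) (Pi.single k 1) := by
  have hd : ContDiff ℝ (⊤ : ℕ∞) (fderiv ℝ f) := hf.fderiv_right (by simp)
  unfold pder
  rw [fderiv_clm_apply (c := fun y => fderiv ℝ f y) (u := fun _ => (Pi.single k 1 : Fin n → ℝ))
    (hd.differentiable (by simp) x) (differentiableAt_const _)]
  simp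

lemma pder_comm {n : ℕ} {f : (Fin n → ℝ) → ℝ} (hf : ContDiff ℝ (⊤ : ℕ∞) f) (i k : Fin n)
    (x : Fin n → ℝ) :
    pder i (pder k f) x = pder k (pder i f) x := by
  rw [pder_pder hf, pder_pder hf]
  exact (hf.contDiffAt.isSymmSndFDerivAt (by rw [minSmoothness_of_isRCLikeNormedField]; exact WithTop.coe_le_coe.mpr le_top)) _ _

lemma pder_mul_sub {n : ℕ} {f g h : (Fin n → ℝ) → ℝ} {x : Fin n → ℝ}
    (hf : DifferentiableAt ℝ f x) (hg : DifferentiableAt ℝ g x)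
    (hh : DifferentiableAt ℝ h x) (i : Fin n) :
    pder i (fun y => f y * (g y - h y)) x
      = pder i f x * (g x - h x) + f x * (pder i g x - pder i h x) := by
  unfold pder
  have : (fun y => f y * (g y - h y)) = fun y => f y * ((fun z => g z - h z) y) := rfl
  rw [this, fderiv_fun_mul (d := fun z => g z - h z) hf (hg.sub hh)]
  have h2 : fderiv ℝ (fun z => g z - h z) x = fderiv ℝ g x - fderiv ℝ h x :=
    fderiv_fun_sub hg hh
  simp [h2]
  ring

theorem richness_quadratic_identity
    {n : ℕ} (lam : Fin n → (Fin n → ℝ) → ℝ)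
    (hsmooth : ∀ i, ContDiff ℝ (⊤ : ℕ∞) (lam i))
    (hne : ∀ i j, i ≠ j → ∀ x, lam i x ≠ lam j x)
    (a : Fin n → Fin n → (Fin n → ℝ) → ℝ)
    (ha : ∀ i j, i ≠ j → ∀ x, a i j x = pder i (lam j) x / (lam i x - lam j x))
    (hR : ∀ i j k, i ≠ j → j ≠ k → i ≠ k →
      ∀ x, pder k (a i j) x = pder i (a k j) x) :
    ∀ i j k, i ≠ j → j ≠ k → i ≠ k → ∀ x,
      pder i (a k j) x =
        a k i x * a i j x + a i k x * a k j x - a k j x * a i j x := by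
  intro i j k hij hjk hik x
  have hd : ∀ p, Differentiable ℝ (lam p) := fun p => (hsmooth p).differentiable (by simp)
  have hsub : ∀ p q, p ≠ q → ∀ y, lam p y - lam q y ≠ 0 := fun p q h y =>
    sub_ne_zero.mpr (hne p q h y)
  have hlam_eq : ∀ p q, p ≠ q → pder p (lam q) = fun y => a p q y * (lam p y - lam q y) := by
    intro p q h
    funext y
    rw [ha p q h y, div_mul_cancel₀ _ (hsub p q h y)]
  have hadiff : ∀ p q, p ≠ q → Differentiable ℝ (a p q) := by
    intro p q h
    have : a p q = fun y => pder p (lam q) y * (lam p y - lam q y)⁻¹ := by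
      funext y
      rw [ha p q h y, div_eq_mul_inv]
    rw [this]
    intro y
    have h1 : DifferentiableAt ℝ (pder p (lam q)) y :=
      ((contDiff_pder (hsmooth q) p).differentiable (by simp)) y
    have h2 : DifferentiableAt ℝ (fun z => lam p z - lam q z) y := ((hd p).sub (hd q)) y
    exact h1.mul (h2.inv (hsub p q h y))
  -- compute both mixed second derivatives of lam j
  have step1 : pder k (pder i (lam j)) x
      = pder k (a i j) x * (lam i x - lam j x)
        + a i j x * (a k i x * (lam k x - lam i x) - a k j x * (lam k x - lam j x)) := by
    rw [hlam_eq i j hij,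
      pder_mul_sub (hadiff i j hij x) ((hd i).differentiableAt) ((hd j).differentiableAt) k,
      hlam_eq k i (Ne.symm hik), hlam_eq k j (Ne.symm hjk)]
  have step2 : pder i (pder k (lam j)) x
      = pder i (a k j) x * (lam k x - lam j x)
        + a k j x * (a i k x * (lam i x - lam k x) - a i j x * (lam i x - lam j x)) := by
    rw [hlam_eq k j (Ne.symm hjk),
      pder_mul_sub (hadiff k j (Ne.symm hjk) x) ((hd k).differentiableAt)
        ((hd j).differentiableAt) i,
      hlam_eq i k hik, hlam_eq i j hij]
  have hsymm : pder k (pder i (lam j)) x = pder i (pder k (lam j)) x :=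
    (pder_comm (hsmooth j) k i x)
  have hRx : pder k (a i j) x = pder i (a k j) x := hR i j k hij hjk hik x
  have heq := step1.symm.trans (hsymm.trans step2)
  rw [hRx] at heq
  have h2 : (lam i x - lam k x) *
      (pder i (a k j) x
        - (a k i x * a i j x + a i k x * a k j x - a k j x * a i j x)) = 0 := by
    linear_combination heq
  rcases mul_eq_zero.mp h2 with h | h
  · exact absurd h (hsub i k hik x)
  · linarith [sub_eq_zero.mp h]
end

section
/- Let λ_i, λ_j, λ_k be real numbers and a_{ij}, a_{kj}, a_{ik}, a_{ki} real numbers. Then the expression d = (a_{ki}a_{ij} + a_{ik}a_{kj} − a_{kj}a_{ij}) · λ_j(λ_i − λ_k)/(1+λ_j²) + a_{ij}·(a_{kj}(λ_k−λ_j)λ_i + λ_j a_{ki}(λ_k−λ_i))/(1+λ_j²) − a_{kj}·(a_{ij}(λ_i−λ_j)λ_k + λ_j a_{ik}(λ_i−λ_k))/(1+λ_j²) − 2a_{ij}·(1+λ_iλ_j)λ_j a_{kj}(λ_k−λ_j)/(1+λ_j²)² + 2a_{kj}·(1+λ_kλ_j)λ_j a_{ij}(λ_i−λ_j)/(1+λ_j²)²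 equals zero. -/
/- Sorting by the power of $1+λ_j^2$ in the denominator: the first three terms reduce to
$2a_{ij}a_{kj}λ_j(λ_k-λ_i)/(1+λ_j^2)$, and since
$(1+λ_kλ_j)(λ_i-λ_j)-(1+λ_iλ_j)(λ_k-λ_j) = (λ_i-λ_k)(1+λ_j^2)$ the last two reduce to its negative. -/

theorem identity_18_vanishes
    (li lj lk aij akj aik aki : ℝ) :
    (aki * aij + aik * akj - akj * aij) * (lj * (li - lk) / (1 + lj ^ 2))
      + aij * ((akj * (lk - lj) * li + lj * aki * (lk - li)) / (1 + lj ^ 2))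
      - akj * ((aij * (li - lj) * lk + lj * aik * (li - lk)) / (1 + lj ^ 2))
      - 2 * aij * ((1 + li * lj) * lj * akj * (lk - lj) / (1 + lj ^ 2) ^ 2)
      + 2 * akj * ((1 + lk * lj) * lj * aij * (li - lj) / (1 + lj ^ 2) ^ 2)
      = 0 := by
  have hD : 1 + lj ^ 2 ≠ 0 := by positivity
  have first_order :
      (aki * aij + aik * akj - akj * aij) * (lj * (li - lk) / (1 + lj ^ 2))
        + aij * ((akj * (lk - lj) * li + lj * aki * (lk - li)) / (1 + lj ^ 2))
        - akj * ((aij * (li - lj) * lk + lj * aik * (li - lk)) / (1 + lj ^ 2))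
        = 2 * aij * akj * lj * (lk - li) / (1 + lj ^ 2) := by
    ring
  have second_order :
      2 * akj * ((1 + lk * lj) * lj * aij * (li - lj) / (1 + lj ^ 2) ^ 2)
        - 2 * aij * ((1 + li * lj) * lj * akj * (lk - lj) / (1 + lj ^ 2) ^ 2)
        = 2 * aij * akj * lj * (li - lk) / (1 + lj ^ 2) := by
    field_simp
    ring
  linear_combination first_order + second_order
end

section
/- Let φ_1, …, φ_n : ℝⁿ → ℝ and r_1, …, r_n : ℝ² → ℝ be smooth, set Φ_j(x,y) = φ_j(r_1(x,y), …, r_n(x,y)), and suppose for each i that cos Φ_i · ∂_x r_i + sin Φ_i · ∂_y r_i = 0, that sin(Φ_i − Φ_j) ≠ 0 and cos(Φ_i − Φ_j) ≠ 0 for i ≠ j, and that there exist smooth G_j : ℝⁿ → ℝ with ∂_{r_i} G_j = (∂_{r_i} φ_j)/tan(φ_i − φ_j) for i ≠ j. Define w_j = −sin Φ_j · ∂_x r_j + cos Φ_j · ∂_y r_j and L_{v_j} f = cos Φ_j · ∂_x f + sin Φ_j · ∂_y f. Then L_{v_j} w_j + (∂_{r_j} φ_j ∘ r) · w_j² − w_j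 · L_{v_j}(G_j ∘ r) = 0. -/
/-!
Write `L` and `T` for the derivatives along the unit vector of angle `Φ_j` and along its
normal. Since `L r_j = 0`, the gradient of `r_j` is `w_j (-sin Φ_j, cos Φ_j)`, and the symmetry
of its second derivative (the gradient is curl free) turns into the transport law
`L w_j = -(T Φ_j) w_j`. By the chain rule, `T Φ_j` and `L (G_j ∘ r)` are sums over `i` of
`∂_i φ_j · T r_i` and `∂_i G_j · L r_i`, where `T r_i = cos (Φ_i - Φ_j) w_i` and
`L r_i = -sin (Φ_i - Φ_j) w_i` because `L_{Φ_i} r_i = 0`. The potential condition makes the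
off-diagonal terms of `T Φ_j + L (G_j ∘ r)` cancel, leaving `∂_j φ_j w_j`.
-/

/-- Partial derivatives on `ℝ × ℝ`. -/
noncomputable def px (f : ℝ × ℝ → ℝ) (p : ℝ × ℝ) : ℝ := fderiv ℝ f p (1, 0)
noncomputable def py (f : ℝ × ℝ → ℝ) (p : ℝ × ℝ) : ℝ := fderiv ℝ f p (0, 1)

open Real

/- The paper's `L_{v}` for the unit field `v = (cos θ, sin θ)`, and the derivative along the
normal field `(-sin θ, cos θ)`, so that `w_j = normalDeriv Φ_j r_j`. -/
noncomputable def dirDeriv (θ f : ℝ × ℝ → ℝ) (p : ℝ × ℝ) : ℝ :=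
  cos (θ p) * px f p + sin (θ p) * py f p

noncomputable def normalDeriv (θ f : ℝ × ℝ → ℝ) (p : ℝ × ℝ) : ℝ :=
  -sin (θ p) * px f p + cos (θ p) * py f p

section FDeriv

variable {E : Type*} [NormedAddCommGroup E] [NormedSpace ℝ E]

theorem differentiable_fderiv_apply {f : E → ℝ} (hf : ContDiff ℝ 2 f) (u : E) :
    Differentiable ℝ (fun q => fderiv ℝ f q u) :=
  ((hf.fderiv_right one_add_one_eq_two.le).clm_apply contDiff_const).differentiable one_ne_zero

theorem fderiv_fderiv_apply_comm {f : E → ℝ} (hf : ContDiff ℝ 2 f) (p u v : E) :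
    fderiv ℝ (fun q => fderiv ℝ f q u) p v = fderiv ℝ (fun q => fderiv ℝ f q v) p u := by
  have hd : DifferentiableAt ℝ (fderiv ℝ f) p :=
    ((hf.fderiv_right one_add_one_eq_two.le).differentiable one_ne_zero) p
  have hsecond : ∀ a b : E, fderiv ℝ (fun q => fderiv ℝ f q a) p b = fderiv ℝ (fderiv ℝ f) p b a :=
    fun a b => by simp [fderiv_clm_apply hd (differentiableAt_const a)]
  rw [hsecond, hsecond, hf.contDiffAt.isSymmSndFDerivAt (by simp)]

theorem fderiv_sin_mul_apply {θ w : E → ℝ} {p : E} (hθ : DifferentiableAt ℝ θ p)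
    (hw : DifferentiableAt ℝ w p) (v : E) :
    fderiv ℝ (fun q => sin (θ q) * w q) p v
      = cos (θ p) * fderiv ℝ θ p v * w p + sin (θ p) * fderiv ℝ w p v := by
  rw [fderiv_fun_mul hθ.sin hw, fderiv_sin hθ]
  simp only [add_apply, smul_apply, smul_eq_mul]
  ring

theorem fderiv_cos_mul_apply {θ w : E → ℝ} {p : E} (hθ : DifferentiableAt ℝ θ p)
    (hw : DifferentiableAt ℝ w p) (v : E) :
    fderiv ℝ (fun q => cos (θ q) * w q) p v
      = -(sin (θ p) * fderiv ℝ θ p v * w p) + cos (θ p) * fderiv ℝ w p v := by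
  rw [fderiv_fun_mul hθ.cos hw, fderiv_cos hθ]
  simp only [add_apply, smul_apply, smul_eq_mul]
  ring

theorem fderiv_comp_apply_eq_sum {n : ℕ} {R : E → Fin n → ℝ} {g : (Fin n → ℝ) → ℝ} {p : E}
    (hg : DifferentiableAt ℝ g (R p)) (hR : DifferentiableAt ℝ R p) (v : E) :
    fderiv ℝ (fun q => g (R q)) p v = ∑ i, pder i g (R p) * fderiv ℝ (fun q => R q i) p v := by
  rw [show (fun q => g (R q)) = g ∘ R from rfl, fderiv_comp p hg hR,
    ContinuousLinearMap.comp_apply, pi_eq_sum_univ' (fderiv ℝ R p v), map_sum]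
  refine Finset.sum_congr rfl fun i _ => ?_
  have hcomponent : fderiv ℝ R p v i = fderiv ℝ (fun q => R q i) p v := by
    rw [show R = fun q i => R q i from rfl, fderiv_pi (differentiableAt_pi.1 hR)]
    rfl
  rw [map_smul, smul_eq_mul, mul_comm, hcomponent, pder]

end FDeriv

theorem ContinuousLinearMap.apply_prod_eq (L : ℝ × ℝ →L[ℝ] ℝ) (a b : ℝ) :
    L (a, b) = a * L (1, 0) + b * L (0, 1) := by
  rw [show ((a, b) : ℝ × ℝ) = a • (1, 0) + b • (0, 1) by simp, map_add, map_smul, map_smul,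
    smul_eq_mul, smul_eq_mul]

section Plane

variable {θ f : ℝ × ℝ → ℝ} {p : ℝ × ℝ}

theorem dirDeriv_eq_fderiv_apply : dirDeriv θ f p = fderiv ℝ f p (cos (θ p), sin (θ p)) := by
  rw [ContinuousLinearMap.apply_prod_eq]; rfl

theorem normalDeriv_eq_fderiv_apply :
    normalDeriv θ f p = fderiv ℝ f p (-sin (θ p), cos (θ p)) := by
  rw [ContinuousLinearMap.apply_prod_eq]; rfl

theorem px_eq_of_dirDeriv_eq_zero (h : dirDeriv θ f p = 0) :
    px f p = -(sin (θ p) * normalDeriv θ f p) := by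
  unfold dirDeriv at h
  unfold normalDeriv
  linear_combination cos (θ p) * h - px f p * sin_sq_add_cos_sq (θ p)

theorem py_eq_of_dirDeriv_eq_zero (h : dirDeriv θ f p = 0) :
    py f p = cos (θ p) * normalDeriv θ f p := by
  unfold dirDeriv at h
  unfold normalDeriv
  linear_combination sin (θ p) * h - py f p * sin_sq_add_cos_sq (θ p)

theorem dirDeriv_eq_of_dirDeriv_eq_zero {α : ℝ × ℝ → ℝ} (h : dirDeriv α f p = 0) :
    dirDeriv θ f p = -(sin (α p - θ p) * normalDeriv α f p) := by
  rw [dirDeriv, px_eq_of_dirDeriv_eq_zero h, py_eq_of_dirDeriv_eq_zero h, sin_sub]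
  ring

theorem normalDeriv_eq_of_dirDeriv_eq_zero {α : ℝ × ℝ → ℝ} (h : dirDeriv α f p = 0) :
    normalDeriv θ f p = cos (α p - θ p) * normalDeriv α f p := by
  rw [normalDeriv, px_eq_of_dirDeriv_eq_zero h, py_eq_of_dirDeriv_eq_zero h, cos_sub]
  ring

theorem dirDeriv_comp {n : ℕ} {R : ℝ × ℝ → Fin n → ℝ} {g : (Fin n → ℝ) → ℝ}
    (hg : DifferentiableAt ℝ g (R p)) (hR : DifferentiableAt ℝ R p) :
    dirDeriv θ (fun q => g (R q)) p = ∑ i, pder i g (R p) * dirDeriv θ (fun q => R q i) p := by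
  simp only [dirDeriv_eq_fderiv_apply, fderiv_comp_apply_eq_sum hg hR]

theorem normalDeriv_comp {n : ℕ} {R : ℝ × ℝ → Fin n → ℝ} {g : (Fin n → ℝ) → ℝ}
    (hg : DifferentiableAt ℝ g (R p)) (hR : DifferentiableAt ℝ R p) :
    normalDeriv θ (fun q => g (R q)) p
      = ∑ i, pder i g (R p) * normalDeriv θ (fun q => R q i) p := by
  simp only [normalDeriv_eq_fderiv_apply, fderiv_comp_apply_eq_sum hg hR]

section Diagonal

variable {n : ℕ} {R : ℝ × ℝ → Fin n → ℝ} {Φ : Fin n → ℝ × ℝ → ℝ} {g : (Fin n → ℝ) → ℝ}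

theorem dirDeriv_comp_of_dirDeriv_eq_zero (hg : DifferentiableAt ℝ g (R p))
    (hR : DifferentiableAt ℝ R p) (hdiag : ∀ i, dirDeriv (Φ i) (fun q => R q i) p = 0) :
    dirDeriv θ (fun q => g (R q)) p
      = -∑ i, pder i g (R p) * (sin (Φ i p - θ p) * normalDeriv (Φ i) (fun q => R q i) p) := by
  rw [dirDeriv_comp hg hR, ← Finset.sum_neg_distrib]
  exact Finset.sum_congr rfl fun i _ => by rw [dirDeriv_eq_of_dirDeriv_eq_zero (hdiag i), mul_neg]

theorem normalDeriv_comp_of_dirDeriv_eq_zero (hg : DifferentiableAt ℝ g (R p))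
    (hR : DifferentiableAt ℝ R p) (hdiag : ∀ i, dirDeriv (Φ i) (fun q => R q i) p = 0) :
    normalDeriv θ (fun q => g (R q)) p
      = ∑ i, pder i g (R p) * (cos (Φ i p - θ p) * normalDeriv (Φ i) (fun q => R q i) p) := by
  rw [normalDeriv_comp hg hR]
  exact Finset.sum_congr rfl fun i _ => by rw [normalDeriv_eq_of_dirDeriv_eq_zero (hdiag i)]

end Diagonal

theorem dirDeriv_normalDeriv_of_dirDeriv_eq_zero (hf : ContDiff ℝ 2 f)
    (hθ : DifferentiableAt ℝ θ p) (hL : ∀ q, dirDeriv θ f q = 0) :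
    dirDeriv θ (normalDeriv θ f) p = -(normalDeriv θ θ p * normalDeriv θ f p) := by
  set w := normalDeriv θ f
  have hx : px f = fun q => -(sin (θ q) * w q) :=
    funext fun q => px_eq_of_dirDeriv_eq_zero (hL q)
  have hy : py f = fun q => cos (θ q) * w q :=
    funext fun q => py_eq_of_dirDeriv_eq_zero (hL q)
  have hw : DifferentiableAt ℝ w p :=
    (hθ.sin.neg.mul (differentiable_fderiv_apply hf _ p)).add
      (hθ.cos.mul (differentiable_fderiv_apply hf _ p))
  have hsymm : py (px f) p = px (py f) p := fderiv_fderiv_apply_comm hf p _ _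
  rw [hx, hy] at hsymm
  unfold px py at hsymm
  rw [fderiv_fun_neg, neg_apply, fderiv_sin_mul_apply hθ hw,
    fderiv_cos_mul_apply hθ hw] at hsymm
  unfold dirDeriv normalDeriv px py
  linear_combination -hsymm

end Plane

theorem mul_sin_eq_of_eq_div_tan {a b x : ℝ} (hx : sin x ≠ 0) (h : a = b / tan x) :
    a * sin x = b * cos x := by
  rw [h, tan_eq_sin_div_cos]
  field_simp

theorem sum_mul_cos_sub_sum_mul_sin {n : ℕ} {a b θ w : Fin n → ℝ} {j : Fin n}
    (h : ∀ i, i ≠ j → b i * sin (θ i - θ j) = a i * cos (θ i - θ j)) :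
    ∑ i, a i * (cos (θ i - θ j) * w i) - ∑ i, b i * (sin (θ i - θ j) * w i) = a j * w j := by
  rw [← Finset.sum_sub_distrib, Finset.sum_eq_single j]
  · simp
  · intro i _ hij
    linear_combination -(w i) * h i hij
  · simp

theorem equation_14_riccati_general
    {n : ℕ}
    (phi G : Fin n → (Fin n → ℝ) → ℝ)
    (r : Fin n → ℝ × ℝ → ℝ)
    (hphi : ∀ i, ContDiff ℝ 2 (phi i)) (hG : ∀ i, ContDiff ℝ 2 (G i))
    (hr : ∀ i, ContDiff ℝ 2 (r i))
    -- the Riemann invariants as a vector-valued map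
    (R : ℝ × ℝ → Fin n → ℝ) (hR : ∀ p i, R p i = r i p)
    -- the characteristic angles as functions on the plane
    (Phi : Fin n → ℝ × ℝ → ℝ) (hPhi : ∀ j p, Phi j p = phi j (R p))
    -- diagonal system: L_{v_i} r_i = 0
    (hchar : ∀ i p, Real.cos (Phi i p) * px (r i) p + Real.sin (Phi i p) * py (r i) p = 0)
    -- strict hyperbolicity and transversality
    (hsin : ∀ i j, i ≠ j → ∀ p, Real.sin (Phi i p - Phi j p) ≠ 0)
    -- richness: existence of the potentials G_j, condition (Φ)
    (hGpot : ∀ i j, i ≠ j → ∀ x,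
      pder i (G j) x = pder i (phi j) x / Real.tan (phi i x - phi j x))
    -- the transverse derivatives w_j
    (w : Fin n → ℝ × ℝ → ℝ)
    (hw : ∀ j p, w j p = -Real.sin (Phi j p) * px (r j) p + Real.cos (Phi j p) * py (r j) p) :
    ∀ j p,
      (Real.cos (Phi j p) * px (w j) p + Real.sin (Phi j p) * py (w j) p)
        + pder j (phi j) (R p) * (w j p) ^ 2
        - w j p * (Real.cos (Phi j p) * px (fun q => G j (R q)) p
            + Real.sin (Phi j p) * py (fun q => G j (R q)) p) = 0 := by
  intro j p
  have hRi : ∀ i, (fun q => R q i) = r i := fun i => funext fun q => hR q i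
  have hRd : DifferentiableAt ℝ R p :=
    differentiableAt_pi.2 fun i => hRi i ▸ (hr i).differentiable two_ne_zero p
  have hPhij : Phi j = fun q => phi j (R q) := funext (hPhi j)
  have hdiag : ∀ i q, dirDeriv (Phi i) (fun q => R q i) q = 0 := fun i => hRi i ▸ hchar i
  have hwi : ∀ i, w i = normalDeriv (Phi i) (fun q => R q i) := fun i => hRi i ▸ funext (hw i)
  have hLw : dirDeriv (Phi j) (w j) p = -(normalDeriv (Phi j) (Phi j) p * w j p) := by
    rw [hwi]
    refine dirDeriv_normalDeriv_of_dirDeriv_eq_zero ((hRi j).symm ▸ hr j) ?_ (hdiag j)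
    exact hPhij ▸ ((hphi j).differentiable two_ne_zero (R p)).comp p hRd
  have hTPhi := normalDeriv_comp_of_dirDeriv_eq_zero (θ := Phi j)
    ((hphi j).differentiable two_ne_zero (R p)) hRd (hdiag · p)
  have hLG := dirDeriv_comp_of_dirDeriv_eq_zero (θ := Phi j)
    ((hG j).differentiable two_ne_zero (R p)) hRd (hdiag · p)
  rw [← hPhij] at hTPhi
  simp only [← hwi] at hTPhi hLG
  have hsum := sum_mul_cos_sub_sum_mul_sin (a := fun i => pder i (phi j) (R p))
    (b := fun i => pder i (G j) (R p)) (w := fun i => w i p) fun i hij =>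
    mul_sin_eq_of_eq_div_tan (hsin i j hij p) (by rw [hPhi, hPhi]; exact hGpot i j hij (R p))
  show dirDeriv (Phi j) (w j) p + _ - w j p * dirDeriv (Phi j) (fun q => G j (R q)) p = 0
  rw [hLw, hTPhi, hLG]
  linear_combination -(w j p) * hsum

theorem equation_14_riccati
    {n : ℕ}
    (phi G : Fin n → (Fin n → ℝ) → ℝ)
    (r : Fin n → ℝ × ℝ → ℝ)
    (hphi : ∀ i, ContDiff ℝ 2 (phi i)) (hG : ∀ i, ContDiff ℝ 2 (G i))
    (hr : ∀ i, ContDiff ℝ 2 (r i))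
    -- the Riemann invariants as a vector-valued map
    (R : ℝ × ℝ → Fin n → ℝ) (hR : ∀ p i, R p i = r i p)
    -- the characteristic angles as functions on the plane
    (Phi : Fin n → ℝ × ℝ → ℝ) (hPhi : ∀ j p, Phi j p = phi j (R p))
    -- diagonal system: L_{v_i} r_i = 0
    (hchar : ∀ i p, Real.cos (Phi i p) * px (r i) p + Real.sin (Phi i p) * py (r i) p = 0)
    -- strict hyperbolicity and transversality
    (hsin : ∀ i j, i ≠ j → ∀ p, Real.sin (Phi i p - Phi j p) ≠ 0)
    (hcos : ∀ i j, i ≠ j → ∀ p, Real.cos (Phi i p - Phi j p) ≠ 0)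
    -- richness: existence of the potentials G_j, condition (Φ)
    (hGpot : ∀ i j, i ≠ j → ∀ x,
      pder i (G j) x = pder i (phi j) x / Real.tan (phi i x - phi j x))
    -- the transverse derivatives w_j
    (w : Fin n → ℝ × ℝ → ℝ)
    (hw : ∀ j p, w j p = -Real.sin (Phi j p) * px (r j) p + Real.cos (Phi j p) * py (r j) p) :
    ∀ j p,
      (Real.cos (Phi j p) * px (w j) p + Real.sin (Phi j p) * py (w j) p)
        + pder j (phi j) (R p) * (w j p) ^ 2
        - w j p * (Real.cos (Phi j p) * px (fun q => G j (R q)) p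
            + Real.sin (Phi j p) * py (fun q => G j (R q)) p) = 0 :=
  equation_14_riccati_general phi G r hphi hG hr R hR Phi hPhi hchar hsin hGpot w hw
end

section
/- Let λ_i, λ_j, λ_k, and real coefficients b_{ij}, b_{kj}, b_{ik}, b_{ki}, b_{ij}' (standing for ∂_{r_k} b_{ij}) satisfy: 1 + λ_iλ_j ≠ 0, 1 + λ_kλ_j ≠ 0, 1 + λ_iλ_k ≠ 0, λ_i ≠ λ_k, and the identity (20): b_{ij}' · (λ_i−λ_k)(1+λ_j²)/((1+λ_iλ_j)(1+λ_kλ_j)) = b_{kj}(1 + (λ_k−λ_j)²/(1+λ_kλ_j)²)(b_{ik}(λ_i−λ_k)/(1+λ_iλ_k) − b_{ij}(λ_i−λ_j)/(1+λ_iλ_j)) − b_{ij}(1 + (λ_i−λ_j)²/(1+λ_iλ_j)²)(b_{ki}(λ_k−λ_i)/(1+λ_iλ_k) − b_{kj}(λ_k−λ_j)/(1+λ_kλ_j)). Define a_{pq} = b_{pq}(1+λ_q²)/(1+λ_pλ_q) and the corresponding expression D for ∂_{r_k} a_{ij} − ∂_{r_i} a_{kj} obtained by substituting (19) and (20) into (21).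 Then D = 0. -/
theorem converse_direction_core_general
    (li lj lk bij bkj bik bki bij' : ℝ)
    (hij : 1 + li * lj ≠ 0) (hkj : 1 + lk * lj ≠ 0) (hik : 1 + li * lk ≠ 0)
    (h20 : bij' * ((li - lk) * (1 + lj ^ 2) / ((1 + li * lj) * (1 + lk * lj))) =
      bkj * (1 + (lk - lj) ^ 2 / (1 + lk * lj) ^ 2) *
        (bik * (li - lk) / (1 + li * lk) - bij * (li - lj) / (1 + li * lj))
      - bij * (1 + (li - lj) ^ 2 / (1 + li * lj) ^ 2) *
        (bki * (lk - li) / (1 + li * lk) - bkj * (lk - lj) / (1 + lk * lj))) :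
    -- derivatives of λ via identity (19)
    ∀ dklj dkli dilj dilk : ℝ,
      dklj = bkj * (1 + lj ^ 2) * (lk - lj) / (1 + lk * lj) →
      dkli = bki * (1 + li ^ 2) * (lk - li) / (1 + lk * li) →
      dilj = bij * (1 + lj ^ 2) * (li - lj) / (1 + li * lj) →
      dilk = bik * (1 + lk ^ 2) * (li - lk) / (1 + li * lk) →
      -- expression (21) after substitution vanishes
      bij' * (lj * (lk - li) * (1 + lj ^ 2) / ((1 + li * lj) * (1 + lk * lj)))
        + bij * ((2 * lj * dklj * (1 + li * lj)
              - (1 + lj ^ 2) * (dkli * lj + li * dklj)) / (1 + li * lj) ^ 2)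
        - bkj * ((2 * lj * dilj * (1 + lk * lj)
              - (1 + lj ^ 2) * (dilk * lj + lk * dilj)) / (1 + lk * lj) ^ 2)
        = 0 := by
  rintro dklj dkli dilj dilk rfl rfl rfl rfl
  have hji : 1 + lj * li ≠ 0 := by rwa [mul_comm]
  have hjk : 1 + lj * lk ≠ 0 := by rwa [mul_comm]
  have hki : 1 + lk * li ≠ 0 := by rwa [mul_comm]
  -- (21) is `-λ_j` times the difference of the two sides of (20), identically in the `b`'s.
  linear_combination (norm := skip) -lj * h20
  field_simp
  ring

/-- The algebraic core of the converse direction of Bialy's Lemma 3.1.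
`bij'` stands for `∂_{r_k} b_{ij} (= ∂_{r_i} b_{kj})`; the derivatives of the
`λ`'s are given by identity (19) and are substituted explicitly below;
hypothesis `h20` is identity (20); the conclusion `D = 0` is the vanishing of
the substituted expression (21) for `∂_{r_k} a_{ij} − ∂_{r_i} a_{kj}`. -/
theorem converse_direction_core
    (li lj lk bij bkj bik bki bij' : ℝ)
    (hij : 1 + li * lj ≠ 0) (hkj : 1 + lk * lj ≠ 0) (hik : 1 + li * lk ≠ 0)
    (hne : li ≠ lk)
    (h20 : bij' * ((li - lk) * (1 + lj ^ 2) / ((1 + li * lj) * (1 + lk * lj))) =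
      bkj * (1 + (lk - lj) ^ 2 / (1 + lk * lj) ^ 2) *
        (bik * (li - lk) / (1 + li * lk) - bij * (li - lj) / (1 + li * lj))
      - bij * (1 + (li - lj) ^ 2 / (1 + li * lj) ^ 2) *
        (bki * (lk - li) / (1 + li * lk) - bkj * (lk - lj) / (1 + lk * lj))) :
    -- derivatives of λ via identity (19)
    ∀ dklj dkli dilj dilk : ℝ,
      dklj = bkj * (1 + lj ^ 2) * (lk - lj) / (1 + lk * lj) →
      dkli = bki * (1 + li ^ 2) * (lk - li) / (1 + lk * li) →
      dilj = bij * (1 + lj ^ 2) * (li - lj) / (1 + li * lj) →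
      dilk = bik * (1 + lk ^ 2) * (li - lk) / (1 + li * lk) →
      -- expression (21) after substitution vanishes
      bij' * (lj * (lk - li) * (1 + lj ^ 2) / ((1 + li * lj) * (1 + lk * lj)))
        + bij * ((2 * lj * dklj * (1 + li * lj)
              - (1 + lj ^ 2) * (dkli * lj + li * dklj)) / (1 + li * lj) ^ 2)
        - bkj * ((2 * lj * dilj * (1 + lk * lj)
              - (1 + lj ^ 2) * (dilk * lj + lk * dilj)) / (1 + lk * lj) ^ 2)
        = 0 :=
  converse_direction_core_general li lj lk bij bkj bik bki bij' hij hkj hik h20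
end
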